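/- For every positive integer n, (k+1)^n = Σ_{i=0}^{n-1} A(n,i+1) · C(k+n-i, n) as polynomials in k, where A(n,i) denotes the Eulerian number and A(n,n+1) := 0. That is, the h*-vector of (k+1)^n has entries h*_i = A(n,i+1) for 0 ≤ i ≤ n. -/

import Mathlib

/-!
Multiplying the series `∑ₖ (k+1)ⁿ Xᵏ` by `(1 - X)ⁿ⁺¹` produces, coefficient by coefficient, exactly
the alternating sums defining `A(n, i+1)`; multiplying back by `(1 - X)⁻⁽ⁿ⁺¹⁾ = ∑ₘ C(n+m, n) Xᵐ`
recovers `(k+1)ⁿ` as `∑ᵢ A(n, i+1) C(k+n-i, n)`. The sum stops at `i < n` because `A(n, i) = 0` for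
`i > n`: up to sign it is the `(n+1)`-st forward difference of a polynomial of degree `n`.
-/

/-- Eulerian number `A(n,i) = Σ_{j=0}^{i} (-1)^j C(n+1,j) (i-j)^n`. -/
def eulerianA (n i : ℕ) : ℤ :=
  ∑ j ∈ Finset.range (i + 1), (-1 : ℤ) ^ j * ((n + 1).choose j : ℤ) * ((i - j : ℕ) : ℤ) ^ n

open Finset PowerSeries fwdDiff

theorem PowerSeries.coeff_one_sub_X_pow {R : Type*} [CommRing R] (m j : ℕ) :
    coeff j ((1 - X : R⟦X⟧) ^ m) = (-1) ^ j * m.choose j := by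
  have h : (1 - X : R⟦X⟧) ^ m = rescale (-1) (((1 + Polynomial.X) ^ m : Polynomial R) : R⟦X⟧) := by
    simp [sub_eq_add_neg]
  rw [h, coeff_rescale, Polynomial.coeff_coe, Polynomial.coeff_one_add_X_pow]

theorem PowerSeries.coeff_eq_sum_coeff_one_sub_X_pow_mul {R : Type*} [CommRing R]
    (P : R⟦X⟧) (d k : ℕ) :
    coeff k P =
      ∑ i ∈ range (k + 1), coeff i ((1 - X) ^ (d + 1) * P) * ((d + k - i).choose d : R) := by
  have hP : P = ((1 - X) ^ (d + 1) * P) * (invOneSubPow R (d + 1)).val := by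
    rw [mul_comm, ← mul_assoc, ← invOneSubPow_inv_eq_one_sub_pow, Units.val_inv, one_mul]
  conv_lhs => rw [hP]
  rw [coeff_mul, Nat.sum_antidiagonal_eq_sum_range_succ
    (fun a b => coeff a ((1 - X) ^ (d + 1) * P) * coeff b (invOneSubPow R (d + 1)).val)]
  refine sum_congr rfl fun i hi => ?_
  rw [invOneSubPow_val_succ_eq_mk_add_choose, coeff_mk,
    Nat.add_sub_assoc (Nat.lt_succ_iff.1 (mem_range.1 hi))]

theorem eulerianA_eq_zero_of_lt {n i : ℕ} (h : n < i) : eulerianA n i = 0 := by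
  have hdiff : (Δ_[1])^[n + 1] (fun x : ℤ => ((i : ℤ) - x) ^ n) 0 = 0 := by
    have hshift : (fun x : ℤ => ((i : ℤ) - x) ^ n) = (-1 : ℤ) ^ n • fun x => (x + -(i : ℤ)) ^ n := by
      ext; simp only [Pi.smul_apply, smul_eq_mul, ← mul_pow]; ring
    rw [hshift, fwdDiff_iter_const_smul, Pi.smul_apply, fwdDiff_iter_comp_add (f := fun x => x ^ n),
      fwdDiff_iter_pow_eq_zero_of_lt (Nat.lt_succ_self n)]
    simp
  rw [fwdDiff_iter_eq_sum_shift] at hdiff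
  -- since `i ≥ n + 1`, only `j ≤ n + 1` contribute and no subtraction `i - j` truncates
  have hrange : eulerianA n i =
      ∑ j ∈ range (n + 2), (-1 : ℤ) ^ j * ((n + 1).choose j : ℤ) * ((i : ℤ) - j) ^ n := by
    rw [eulerianA, ← sum_subset (range_subset_range.2 (by omega : n + 2 ≤ i + 1))]
    · refine sum_congr rfl fun j hj => ?_
      rw [Nat.cast_sub (by simp at hj; omega)]
    · intro j _ hj
      simp [Nat.choose_eq_zero_of_lt (by simp at hj; omega : n + 1 < j)]
  rw [hrange, ← mul_right_inj' (pow_ne_zero (n + 1) (neg_ne_zero.2 one_ne_zero)), mul_zero,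
    ← hdiff, mul_sum]
  refine sum_congr rfl fun j hj => ?_
  obtain ⟨d, hd⟩ := Nat.exists_eq_add_of_le (Nat.lt_succ_iff.1 (mem_range.1 hj))
  have hsq : (-1 : ℤ) ^ j * (-1) ^ j = 1 := by rw [← mul_pow]; simp
  rw [hd, Nat.add_sub_cancel_left]
  simp only [smul_eq_mul, zero_add, nsmul_eq_mul, mul_one]
  linear_combination (-1 : ℤ) ^ d * ((j + d).choose j : ℤ) * ((i : ℤ) - j) ^ n * hsq

theorem coeff_one_sub_X_pow_mul_mk_succ_pow {n : ℕ} (hn : n ≠ 0) (i : ℕ) :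
    coeff i ((1 - X) ^ (n + 1) * PowerSeries.mk fun k : ℕ => ((k : ℤ) + 1) ^ n) =
      eulerianA n (i + 1) := by
  -- the last term `j = i + 1` of `eulerianA n (i + 1)` carries the factor `0 ^ n`
  rw [coeff_mul, Nat.sum_antidiagonal_eq_sum_range_succ (fun a b =>
      coeff a ((1 - X : ℤ⟦X⟧) ^ (n + 1)) * coeff b (PowerSeries.mk fun k : ℕ => ((k : ℤ) + 1) ^ n)),
    eulerianA, sum_range_succ _ (i + 1), Nat.sub_self, Nat.cast_zero, zero_pow hn, mul_zero,
    add_zero]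
  refine sum_congr rfl fun j hj => ?_
  rw [coeff_one_sub_X_pow, coeff_mk, Nat.sub_add_comm (Nat.lt_succ_iff.1 (mem_range.1 hj))]
  push_cast
  ring

/-- The h*-vector of `(k+1)^n` has entries `A(n,i+1)`:
`(k+1)^n = Σ_{i=0}^{n-1} A(n,i+1) · C(k+n-i, n)` (the term `i = n` vanishes
since `A(n,n+1) = 0`). -/
theorem hstar_succ_pow_eq_eulerian (n : ℕ) (hn : 1 ≤ n) (k : ℕ) :
    ((k : ℤ) + 1) ^ n =
      ∑ i ∈ Finset.range n, eulerianA n (i + 1) * ((k + n - i).choose n : ℤ) := by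
  have hsum :=
    coeff_eq_sum_coeff_one_sub_X_pow_mul (PowerSeries.mk fun k : ℕ => ((k : ℤ) + 1) ^ n) n k
  rw [coeff_mk] at hsum
  simp only [coeff_one_sub_X_pow_mul_mk_succ_pow (Nat.one_le_iff_ne_zero.1 hn),
    Nat.add_comm n k] at hsum
  have hvanish : ∀ i, k < i ∨ n ≤ i → eulerianA n (i + 1) * ((k + n - i).choose n : ℤ) = 0 := by
    rintro i (hki | hni)
    · rw [Nat.choose_eq_zero_of_lt (by omega), Nat.cast_zero, mul_zero]
    · rw [eulerianA_eq_zero_of_lt (by omega), zero_mul]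
  calc ((k : ℤ) + 1) ^ n
    _ = ∑ i ∈ range (k + 1), eulerianA n (i + 1) * ((k + n - i).choose n : ℤ) := hsum
    _ = ∑ i ∈ range (n + (k + 1)), eulerianA n (i + 1) * ((k + n - i).choose n : ℤ) :=
      sum_subset (range_subset_range.2 (Nat.le_add_left _ _)) fun i _ hi =>
        hvanish i (.inl (by simpa using hi))
    _ = ∑ i ∈ range n, eulerianA n (i + 1) * ((k + n - i).choose n : ℤ) :=
      (sum_subset (range_subset_range.2 (Nat.le_add_right _ _)) fun i _ hi =>
        hvanish i (.inr (by simpa using hi))).symm
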